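/- A graph in which every vertex has degree at most d is (d+1)-claw-free: every vertex has at most d pairwise non-adjacent neighbors. Consequently, the greedy-by-weight algorithm for maximum weight independent set is a d-approximation on graphs of maximum degree at most d (with d ≥ 1). -/

import Mathlib

/-!
Charge every vertex `v` to a greedily selected vertex `f v` at least as heavy as `v`: to `v`
itself if it was selected, otherwise to a selected neighbour that blocked it (it came earlier,
hence is heavier). In a `(d+1)`-claw-free graph an independent set `I` meets each fibre of `f`
in at most `d` vertices: a fibre over `g ∉ I` consists of pairwise non-adjacent neighbours of
`g`, and one over `g ∈ I` is `{g}`. Hence `w(I) ≤ d · w(greedy)`. A graph of maximum degree `d`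
is `(d+1)`-claw-free simply because a vertex has at most `d` neighbours.
-/

/-- Greedy independent set: process the list in order, adding a vertex whenever it is
non-adjacent to all previously added vertices. -/
noncomputable def greedySelect {V : Type*} [DecidableEq V] (adj : V → V → Prop) :
    List V → Finset V → Finset V
  | [], acc => acc
  | v :: rest, acc =>
    haveI := Classical.propDecidable (∀ u ∈ acc, ¬ adj v u)
    if ∀ u ∈ acc, ¬ adj v u then greedySelect adj rest (insert v acc)
    else greedySelect adj rest acc

open Finset

section Greedy

variable {V : Type*} [DecidableEq V] (adj : V → V → Prop)

theorem subset_greedySelect : ∀ (l : List V) (acc : Finset V), acc ⊆ greedySelect adj l acc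
  | [], _ => by rw [greedySelect]
  | a :: rest, acc => by
    rw [greedySelect]
    split_ifs
    · exact (subset_insert a acc).trans (subset_greedySelect rest _)
    · exact subset_greedySelect rest acc

theorem exists_mem_greedySelect_eq_or_adj {β : Type*} [Preorder β] (w : V → β) :
    ∀ (l : List V) (acc : Finset V), l.Pairwise (fun x y => w y ≤ w x) →
      (∀ u ∈ acc, ∀ x ∈ l, w x ≤ w u) →
      ∀ v ∈ l, ∃ g ∈ greedySelect adj l acc, (g = v ∨ adj v g) ∧ w v ≤ w g
  | [], _, _, _, _, hv => absurd hv List.not_mem_nil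
  | a :: rest, acc, hsort, hacc, v, hv => by
    have hrest := hsort.of_cons
    have ha : ∀ x ∈ rest, w x ≤ w a := fun x hx => List.rel_of_pairwise_cons hsort hx
    have hacc' : ∀ u ∈ acc, ∀ x ∈ rest, w x ≤ w u :=
      fun u hu x hx => hacc u hu x (List.mem_cons_of_mem a hx)
    rw [greedySelect]
    split_ifs with hfree
    · rcases List.mem_cons.mp hv with rfl | hv
      · exact ⟨v, subset_greedySelect adj rest _ (mem_insert_self v acc), Or.inl rfl, le_rfl⟩
      · refine exists_mem_greedySelect_eq_or_adj w rest _ hrest ?_ v hv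
        simpa only [forall_mem_insert] using ⟨ha, hacc'⟩
    · rcases List.mem_cons.mp hv with rfl | hv
      · push Not at hfree
        obtain ⟨u, hu, hvu⟩ := hfree
        exact ⟨u, subset_greedySelect adj rest acc hu, Or.inr hvu,
          hacc u hu v List.mem_cons_self⟩
      · exact exists_mem_greedySelect_eq_or_adj w rest acc hrest hacc' v hv

end Greedy

theorem Finset.sum_le_nsmul_sum_of_card_fiber_le {ι κ β : Type*} [DecidableEq κ]
    [AddCommMonoid β] [PartialOrder β] [IsOrderedAddMonoid β]
    {I : Finset ι} {R : Finset κ} {f : ι → κ} {u : ι → β} {w : κ → β} {d : ℕ}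
    (hfR : ∀ i ∈ I, f i ∈ R) (hfw : ∀ i ∈ I, u i ≤ w (f i))
    (hw : ∀ g ∈ R, 0 ≤ w g) (hcard : ∀ g ∈ R, #{i ∈ I | f i = g} ≤ d) :
    ∑ i ∈ I, u i ≤ d • ∑ g ∈ R, w g := by
  have hfiber : ∀ g ∈ R, ∑ i ∈ I with f i = g, u i ≤ d • w g := fun g hg =>
    calc ∑ i ∈ I with f i = g, u i
        ≤ ∑ i ∈ I with f i = g, w g := sum_le_sum fun i hi => by
          obtain ⟨hiI, rfl⟩ := mem_filter.mp hi
          exact hfw i hiI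
      _ = #{i ∈ I | f i = g} • w g := sum_const _
      _ ≤ d • w g := nsmul_le_nsmul_left (hw g hg) (hcard g hg)
  calc ∑ i ∈ I, u i = ∑ g ∈ R, ∑ i ∈ I with f i = g, u i :=
        (sum_fiberwise_of_maps_to hfR u).symm
    _ ≤ ∑ g ∈ R, d • w g := sum_le_sum hfiber
    _ = d • ∑ g ∈ R, w g := (smul_sum ..).symm

namespace SimpleGraph

variable {V : Type*} (G : SimpleGraph V)

/-- `G` has no induced star `K_{1,k}`. -/
def IsClawFree (k : ℕ) : Prop :=
  ∀ v (S : Finset V), (∀ u ∈ S, G.Adj v u) → G.IsIndepSet (S : Set V) → #S < k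

variable {G}

theorem isClawFree_of_degree_le [Fintype V] [DecidableEq V] [DecidableRel G.Adj] {d : ℕ}
    (hdeg : ∀ v, G.degree v ≤ d) : G.IsClawFree (d + 1) := fun v S hS _ =>
  calc #S ≤ #(G.neighborFinset v) :=
        card_le_card fun u hu => (G.mem_neighborFinset v u).mpr (hS u hu)
    _ = G.degree v := G.card_neighborFinset_eq_degree v
    _ < d + 1 := Nat.lt_succ_of_le (hdeg v)

theorem IsClawFree.card_fiber_le [DecidableEq V] {d : ℕ} (hG : G.IsClawFree (d + 1))
    (hd : 1 ≤ d) {I : Finset V} (hI : G.IsIndepSet (I : Set V)) {f : V → V}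
    (hf : ∀ v ∈ I, f v = v ∨ G.Adj v (f v)) (g : V) : #{v ∈ I | f v = g} ≤ d := by
  have hadj : ∀ v ∈ I, f v = g → v ≠ g → G.Adj g v := by
    rintro v hv rfl hne
    exact ((hf v hv).resolve_left hne.symm).symm
  by_cases hg : g ∈ I
  · have hsub : {v ∈ I | f v = g} ⊆ {g} := fun v hv => by
      obtain ⟨hvI, hvg⟩ := mem_filter.mp hv
      rw [mem_singleton]
      by_contra hne
      exact hI hg hvI (Ne.symm hne) (hadj v hvI hvg hne)
    exact (card_le_card hsub).trans ((card_singleton g).trans_le hd)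
  · have hind : G.IsIndepSet (({v ∈ I | f v = g} : Finset V) : Set V) :=
      hI.mono (coe_subset.mpr (filter_subset _ I))
    refine Nat.lt_succ_iff.mp (hG g _ (fun v hv => ?_) hind)
    obtain ⟨hvI, hvg⟩ := mem_filter.mp hv
    exact hadj v hvI hvg (ne_of_mem_of_not_mem hvI hg)

end SimpleGraph

theorem bounded_degree_claw_free_and_greedy_approx {V : Type*} [Fintype V] [DecidableEq V]
    (G : SimpleGraph V) [DecidableRel G.Adj]
    (d : ℕ) (hd : 1 ≤ d) (hdeg : ∀ v : V, G.degree v ≤ d)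
    (w : V → ℝ) (hw : ∀ v, 0 ≤ w v)
    (l : List V) (hsort : l.Pairwise fun x y => w y ≤ w x)
    (hall : ∀ v : V, v ∈ l) :
    (∀ v : V, ∀ S : Finset V,
      (∀ u ∈ S, G.Adj v u) →
      (∀ u ∈ S, ∀ u' ∈ S, u ≠ u' → ¬ G.Adj u u') →
      S.card ≤ d) ∧
    (∀ I : Finset V, (∀ u ∈ I, ∀ v ∈ I, ¬ G.Adj u v) →
      (1 / (d : ℝ)) * ∑ v ∈ I, w v ≤ ∑ v ∈ greedySelect G.Adj l ∅, w v) := by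
  have hclaw : G.IsClawFree (d + 1) := SimpleGraph.isClawFree_of_degree_le hdeg
  refine ⟨fun v S hS hSind => Nat.lt_succ_iff.mp (hclaw v S hS hSind), fun I hI => ?_⟩
  choose f hfR hf using fun v =>
    exists_mem_greedySelect_eq_or_adj G.Adj w l ∅ hsort (by simp) v (hall v)
  have hIind : G.IsIndepSet (I : Set V) := fun u hu v hv _ => hI u hu v hv
  have hcharge := sum_le_nsmul_sum_of_card_fiber_le (fun v _ => hfR v) (fun v _ => (hf v).2)
    (fun g _ => hw g) fun g _ => hclaw.card_fiber_le hd hIind (fun v _ => (hf v).1) g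
  rw [nsmul_eq_mul] at hcharge
  rwa [one_div, inv_mul_le_iff₀ (by exact_mod_cast hd)]
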